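/- Let G be a graph, C ⊆ V(G) a clique in G, and let G' be the graph obtained from G by contracting C to a single vertex u_C and attaching a new pendant vertex v_C adjacent only to u_C. If D' is a connected vertex cover of G' containing u_C but not v_C, then D = (D' \ {u_C}) ∪ C is a connected vertex cover of G. -/

import Mathlib

/-!
Send every vertex of the contracted graph to a vertex of `G` it stands for, with `u_C` and
`v_C` both going to a fixed `c₀ ∈ C`. An edge inside `D'` then becomes a path inside `D`:
an edge `u_C a` comes from an edge `s a` of `G` with `s ∈ C`, and `s` is joined to `c₀`
because `C` is a clique. So the connectivity of `D'` transfers to `D`.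
-/

/-- `X` is a vertex cover of `G`: every edge has at least one endpoint in `X`. -/
def IsVertexCover {V : Type*} (G : SimpleGraph V) (X : Set V) : Prop :=
  ∀ ⦃u v : V⦄, G.Adj u v → u ∈ X ∨ v ∈ X

/-- `X` is a connected vertex cover of `G`. -/
def IsConnectedVertexCover {V : Type*} (G : SimpleGraph V) (X : Set V) : Prop :=
  IsVertexCover G X ∧ (G.induce X).Connected

/-- The graph obtained from `G` by contracting the set `C` to a single vertex `u_C`
(represented by `some none`) and attaching a new pendant vertex `v_C`
(represented by `none`) adjacent only to `u_C`. -/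
def contractCliquePendant {V : Type*} (G : SimpleGraph V) (C : Set V) :
    SimpleGraph (Option (Option {v : V // v ∉ C})) :=
  SimpleGraph.fromRel (fun x y =>
    match x, y with
    | some (some a), some (some b) => G.Adj a.1 b.1
    | some none, some (some a) => ∃ s ∈ C, G.Adj s a.1
    | none, some none => True
    | _, _ => False)

theorem SimpleGraph.Reachable.map_of_adj {V W : Type*} {G : SimpleGraph V} {H : SimpleGraph W}
    {f : V → W} (hf : ∀ ⦃x y⦄, G.Adj x y → H.Reachable (f x) (f y)) {u v : V}
    (h : G.Reachable u v) : H.Reachable (f u) (f v) := by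
  simp only [SimpleGraph.reachable_iff_reflTransGen] at h hf ⊢
  exact Relation.ReflTransGen.lift' f (fun _ _ hxy => hf hxy) _ _ h

theorem SimpleGraph.IsClique.reachable_induce {V : Type*} {G : SimpleGraph V} {C D : Set V}
    (hC : G.IsClique C) (hCD : C ⊆ D) {c c' : V} (hc : c ∈ C) (hc' : c' ∈ C) :
    (G.induce D).Reachable ⟨c, hCD hc⟩ ⟨c', hCD hc'⟩ := by
  rcases eq_or_ne c c' with rfl | hne
  · rfl
  · exact SimpleGraph.Adj.reachable (hC hc hc' hne)

namespace contractCliquePendant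

variable {V : Type*} {G : SimpleGraph V} {C : Set V}

theorem adj_some_some {a b : {v : V // v ∉ C}} :
    (contractCliquePendant G C).Adj (some (some a)) (some (some b)) ↔ G.Adj a b := by
  simp only [contractCliquePendant, SimpleGraph.fromRel_adj]
  exact ⟨fun ⟨_, h⟩ => h.elim id (·.symm),
    fun h => ⟨by simpa [Subtype.ext_iff] using h.ne, .inl h⟩⟩

theorem adj_some_none_some_some {a : {v : V // v ∉ C}} :
    (contractCliquePendant G C).Adj (some none) (some (some a)) ↔ ∃ s ∈ C, G.Adj s a := by
  simp [contractCliquePendant]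

theorem adj_none_some_none : (contractCliquePendant G C).Adj none (some none) := by
  simp [contractCliquePendant]

theorem not_adj_none_some_some {a : {v : V // v ∉ C}} :
    ¬ (contractCliquePendant G C).Adj none (some (some a)) := by
  simp [contractCliquePendant]

/-- The set `(D' \ {u_C}) ∪ C` of vertices of `G`. -/
def uncontract (C : Set V) (D' : Set (Option (Option {v : V // v ∉ C}))) : Set V :=
  {v | ∃ h : v ∉ C, some (some ⟨v, h⟩) ∈ D'} ∪ C

def representative (c₀ : V) : Option (Option {v : V // v ∉ C}) → V
  | some (some a) => a
  | _ => c₀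

variable {D' : Set (Option (Option {v : V // v ∉ C}))}

theorem subset_uncontract : C ⊆ uncontract C D' := Set.subset_union_right

theorem representative_mem_uncontract {c₀ : V} (hc₀ : c₀ ∈ C) :
    ∀ {x}, x ∈ D' → representative c₀ x ∈ uncontract C D'
  | some (some a), hx => Or.inl ⟨a.2, hx⟩
  | some none, _ | none, _ => subset_uncontract hc₀

theorem isVertexCover_uncontract (hD' : IsVertexCover (contractCliquePendant G C) D') :
    IsVertexCover G (uncontract C D') := by
  intro u v huv
  by_cases hu : u ∈ C
  · exact .inl (subset_uncontract hu)
  by_cases hv : v ∈ C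
  · exact .inr (subset_uncontract hv)
  rcases hD' (adj_some_some (a := ⟨u, hu⟩) (b := ⟨v, hv⟩) |>.2 huv) with h | h
  · exact .inl (.inl ⟨hu, h⟩)
  · exact .inr (.inl ⟨hv, h⟩)

variable {c₀ : V}

theorem reachable_of_exists_adj (hC : G.IsClique C) (hc₀ : c₀ ∈ C) {b : {v : V // v ∉ C}}
    (hb : some (some b) ∈ D') (h : ∃ s ∈ C, G.Adj s b) :
    (G.induce (uncontract C D')).Reachable
      ⟨c₀, subset_uncontract hc₀⟩ ⟨b, .inl ⟨b.2, hb⟩⟩ := by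
  obtain ⟨s, hs, hsb⟩ := h
  exact (hC.reachable_induce subset_uncontract hc₀ hs).trans (SimpleGraph.Adj.reachable hsb)

theorem reachable_representative_of_adj (hC : G.IsClique C) (hc₀ : c₀ ∈ C) {x y}
    (hx : x ∈ D') (hy : y ∈ D') (hxy : (contractCliquePendant G C).Adj x y) :
    (G.induce (uncontract C D')).Reachable
      ⟨representative c₀ x, representative_mem_uncontract hc₀ hx⟩
      ⟨representative c₀ y, representative_mem_uncontract hc₀ hy⟩ := by
  rcases x with _ | _ | a <;> rcases y with _ | _ | b
  case none.some.some => exact absurd hxy not_adj_none_some_some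
  case some.some.none => exact absurd hxy.symm not_adj_none_some_some
  case some.none.some.some =>
    exact reachable_of_exists_adj hC hc₀ hy (adj_some_none_some_some.1 hxy)
  case some.some.some.none =>
    exact (reachable_of_exists_adj hC hc₀ hx (adj_some_none_some_some.1 hxy.symm)).symm
  case some.some.some.some => exact SimpleGraph.Adj.reachable (adj_some_some.1 hxy)
  all_goals rfl

theorem connected_induce_uncontract (hC : G.IsClique C) (hc₀ : c₀ ∈ C)
    (hcov : IsVertexCover (contractCliquePendant G C) D')
    (hconn : ((contractCliquePendant G C).induce D').Connected) :
    (G.induce (uncontract C D')).Connected := by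
  let f : D' → uncontract C D' := fun x =>
    ⟨representative c₀ x, representative_mem_uncontract hc₀ x.2⟩
  have hf : ∀ ⦃x y⦄, ((contractCliquePendant G C).induce D').Adj x y →
      (G.induce (uncontract C D')).Reachable (f x) (f y) := fun x y hxy =>
    reachable_representative_of_adj hC hc₀ x.2 y.2 hxy
  -- Covering the pendant edge puts `u_C` or `v_C` into `D'`; both stand for `c₀ ∈ C`.
  obtain ⟨z, hz, hzC⟩ : ∃ z ∈ D', representative c₀ z ∈ C :=
    (hcov adj_none_some_none).elim (⟨_, ·, hc₀⟩) (⟨_, ·, hc₀⟩)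
  have reach_z : ∀ u, (G.induce (uncontract C D')).Reachable u (f ⟨z, hz⟩) := by
    rintro ⟨u, ⟨hu, hmem⟩ | hu⟩
    · exact (hconn.preconnected ⟨some (some ⟨u, hu⟩), hmem⟩ ⟨z, hz⟩).map_of_adj hf
    · exact hC.reachable_induce subset_uncontract hu hzC
  have : Nonempty (uncontract C D') := ⟨f ⟨z, hz⟩⟩
  exact .mk fun u v => (reach_z u).trans (reach_z v).symm

end contractCliquePendant

theorem stmt16_general {V : Type} (G : SimpleGraph V)
    (C : Set V) (hCne : C.Nonempty) (hC : G.IsClique C)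
    (D' : Set (Option (Option {v : V // v ∉ C})))
    (hD' : IsConnectedVertexCover (contractCliquePendant G C) D')
    (D : Set V)
    (hD : D = {v : V | ∃ h : v ∉ C, some (some ⟨v, h⟩) ∈ D'} ∪ C) :
    IsConnectedVertexCover G D := by
  obtain ⟨c₀, hc₀⟩ := hCne
  subst hD
  exact ⟨contractCliquePendant.isVertexCover_uncontract hD'.1,
    contractCliquePendant.connected_induce_uncontract hC hc₀ hD'.1 hD'.2⟩

/-- If `D'` is a connected vertex cover of the graph obtained by contracting a clique
`C` to `u_C` and adding a pendant `v_C`, with `u_C ∈ D'` and `v_C ∉ D'`, then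
`(D' \ {u_C}) ∪ C` is a connected vertex cover of `G`. -/
theorem stmt16 {V : Type} [Fintype V] (G : SimpleGraph V) (hG : G.Connected)
    (C : Set V) (hCne : C.Nonempty) (hC : G.IsClique C)
    (D' : Set (Option (Option {v : V // v ∉ C})))
    (hD' : IsConnectedVertexCover (contractCliquePendant G C) D')
    (huC : some none ∈ D') (hvC : none ∉ D')
    (D : Set V)
    (hD : D = {v : V | ∃ h : v ∉ C, some (some ⟨v, h⟩) ∈ D'} ∪ C) :
    IsConnectedVertexCover G D :=
  stmt16_general G C hCne hC D' hD' D hD
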